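/- arXiv:1502.07045 — 5 statements merged into one kernel-verified Lean document; each statement's English description precedes it below -/
import Mathlib

section
/- Let N be a binary phylogenetic network over a finite leaf set X. If every vertex of N of in-degree 2 has the property that both of its parents have out-degree 2, then N is tree-based. -/
/-! Directed multigraphs, walks, and binary phylogenetic networks
(following Francis & Steel, "Which phylogenetic networks are merely
trees with additional arcs?"). -/

universe u1 u2 u3 u4 u5 u6 u7

/-- In-degree of `v`: the number of arcs with target `v`. -/
noncomputable def InDeg {V : Type u2} {A : Type u3} (t : A → V) (v : V) : ℕ := {a : A | t a = v}.ncard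

/-- Out-degree of `v`: the number of arcs with source `v`. -/
noncomputable def OutDeg {V : Type u2} {A : Type u3} (s : A → V) (v : V) : ℕ := {a : A | s a = v}.ncard

/-- In-degree of `v` in the sub-digraph with arc set `A₀`. -/
noncomputable def InDegIn {V : Type u2} {A : Type u3} (t : A → V) (A₀ : Set A) (v : V) : ℕ :=
  {a : A | a ∈ A₀ ∧ t a = v}.ncard

/-- Out-degree of `v` in the sub-digraph with arc set `A₀`. -/
noncomputable def OutDegIn {V : Type u2} {A : Type u3} (s : A → V) (A₀ : Set A) (v : V) : ℕ :=
  {a : A | a ∈ A₀ ∧ s a = v}.ncard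

/-- `ArcWalk s t u p v` : the list of arcs `p` is a directed walk from `u` to `v`
(consecutive arcs are compatible). -/
inductive ArcWalk {V : Type u2} {A : Type u3} (s t : A → V) : V → List A → V → Prop
  | nil (v : V) : ArcWalk s t v [] v
  | cons {u w : V} {a : A} {p : List A} :
      s a = u → ArcWalk s t (t a) p w → ArcWalk s t u (a :: p) w

/-- The digraph `(V, S)` is a rooted directed tree with root `r`: every vertex of `V`
is reachable from `r` by a unique directed path using only arcs in `S`. -/
def IsRootedTree {V : Type u2} {A : Type u3} (s t : A → V) (S : Set A) (r : V) : Prop :=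
  ∀ v : V, ∃! p : List A, (∀ a ∈ p, a ∈ S) ∧ ArcWalk s t r p v

/-- `(V₀, A₀)` is a rooted directed tree with root `r` (as a sub-digraph of the
ambient digraph given by `s`, `t`). -/
def IsRootedTreeOn {V : Type u2} {A : Type u3} (s t : A → V) (V₀ : Set V) (A₀ : Set A)
    (r : V) : Prop :=
  r ∈ V₀ ∧ (∀ a ∈ A₀, s a ∈ V₀ ∧ t a ∈ V₀) ∧
    ∀ v ∈ V₀, ∃! p : List A, (∀ a ∈ p, a ∈ A₀) ∧ ArcWalk s t r p v

/-- A set of arcs is independent if no two distinct arcs of it share a vertex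
(the vertices of an arc `a` being `s a` and `t a`). -/
def IndepArcs {V : Type u2} {A : Type u3} (s t : A → V) (I : Set A) : Prop :=
  ∀ a ∈ I, ∀ b ∈ I, a ≠ b → s a ≠ s b ∧ s a ≠ t b ∧ t a ≠ s b ∧ t a ≠ t b

/-- A binary phylogenetic network over the (finite) leaf set `X`: a finite acyclic
directed multigraph whose out-degree-0 vertices are exactly the (images of the)
elements of `X`, each leaf has in-degree 1, there is a unique in-degree-0 vertex
(the root) of out-degree 1 or 2, and every other vertex has in-degree 2 and
out-degree 1, or in-degree 1 and out-degree 2. -/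
structure PhyloNetwork (X : Type u1) (V : Type u2) (A : Type u3) where
  src : A → V
  tgt : A → V
  leafEmb : X → V
  root : V
  finV : Finite V
  finA : Finite A
  leafEmb_inj : Function.Injective leafEmb
  acyclic : ∀ (v : V) (p : List A), p ≠ [] → ¬ ArcWalk src tgt v p v
  leaf_iff : ∀ v : V, (∃ x : X, leafEmb x = v) ↔ OutDeg src v = 0
  leaf_indeg : ∀ x : X, InDeg tgt (leafEmb x) = 1
  root_indeg : InDeg tgt root = 0
  root_unique : ∀ v : V, InDeg tgt v = 0 → v = root
  root_outdeg : OutDeg src root = 1 ∨ OutDeg src root = 2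
  deg_other : ∀ v : V, v ≠ root → (¬ ∃ x : X, leafEmb x = v) →
    (InDeg tgt v = 2 ∧ OutDeg src v = 1) ∨ (InDeg tgt v = 1 ∧ OutDeg src v = 2)

namespace PhyloNetwork

variable {X : Type u1} {V : Type u2} {A : Type u3}

/-- The set of leaves of the network (the copy of `X` inside `V`). -/
def leaves (N : PhyloNetwork X V A) : Set V := Set.range N.leafEmb

/-- `S ⊆ A` is a support tree for `N`: the digraph `(V, S)` is a rooted directed
tree with root `N.root` whose out-degree-0 vertices are exactly the leaves. -/
def IsSupportTree (N : PhyloNetwork X V A) (S : Set A) : Prop :=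
  IsRootedTree N.src N.tgt S N.root ∧
    ∀ v : V, OutDegIn N.src S v = 0 ↔ v ∈ N.leaves

/-- `N` is tree-based if it has a support tree. -/
def TreeBased (N : PhyloNetwork X V A) : Prop := ∃ S : Set A, N.IsSupportTree S

/-- `S₁`: the arcs whose source has out-degree 1 or whose target has in-degree 1. -/
def S1 (N : PhyloNetwork X V A) : Set A :=
  {a : A | OutDeg N.src (N.src a) = 1 ∨ InDeg N.tgt (N.tgt a) = 1}

/-- `S` is admissible: it contains `S₁`, every in-degree-2 vertex has exactly one
incoming arc in `S` (C₁), and every out-degree-2 vertex has at least one outgoing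
arc in `S` (C₂). -/
def Admissible (N : PhyloNetwork X V A) (S : Set A) : Prop :=
  N.S1 ⊆ S ∧
    (∀ v : V, InDeg N.tgt v = 2 → ∃! a : A, a ∈ S ∧ N.tgt a = v) ∧
    (∀ v : V, OutDeg N.src v = 2 → ∃ a ∈ S, N.src a = v)

/-- An antichain: no directed path from one element to another distinct element. -/
def IsAntichainIn (N : PhyloNetwork X V A) (𝒜 : Set V) : Prop :=
  ∀ u ∈ 𝒜, ∀ v ∈ 𝒜, u ≠ v → ∀ p : List A, ¬ ArcWalk N.src N.tgt u p v

/-- The antichain-to-leaf property: from every antichain of non-leaf vertices there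
is a family of pairwise arc-disjoint directed paths to leaves. -/
def AntichainToLeaf (N : PhyloNetwork X V A) : Prop :=
  ∀ 𝒜 : Set V, (∀ v ∈ 𝒜, v ∉ N.leaves) → N.IsAntichainIn 𝒜 →
    ∃ p : V → List A,
      (∀ v ∈ 𝒜, ∃ w ∈ N.leaves, ArcWalk N.src N.tgt v (p v) w) ∧
      (∀ u ∈ 𝒜, ∀ v ∈ 𝒜, u ≠ v → ∀ a ∈ p u, a ∉ p v)

end PhyloNetwork

/-- The sub-digraph `(V₀, A₀)` of the digraph given by `s, t` is a subdivision of the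
digraph given by `s', t'`, realized by the vertex map `φV`: the vertices of the target
digraph correspond exactly to the vertices of `(V₀, A₀)` that do not have in-degree 1
and out-degree 1, and each target arc corresponds to a directed path of `(V₀, A₀)`
with all internal vertices suppressed, these paths partitioning `A₀`. Equivalently,
the target digraph is obtained from `(V₀, A₀)` by repeatedly suppressing all vertices
of in-degree 1 and out-degree 1. -/
def SubdivOn {V : Type u2} {A : Type u3} {V' : Type u4} {A' : Type u5}
    (s t : A → V) (V₀ : Set V) (A₀ : Set A) (s' t' : A' → V') (φV : V' → V) : Prop :=
  Function.Injective φV ∧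
  (∀ v' : V', φV v' ∈ V₀) ∧
  (∀ a ∈ A₀, s a ∈ V₀ ∧ t a ∈ V₀) ∧
  (∀ v ∈ V₀, v ∈ Set.range φV ↔ ¬ (InDegIn t A₀ v = 1 ∧ OutDegIn s A₀ v = 1)) ∧
  ∃ φA : A' → List A,
    (∀ e : A', φA e ≠ [] ∧ (φA e).Nodup ∧ (∀ a ∈ φA e, a ∈ A₀) ∧
      ArcWalk s t (φV (s' e)) (φA e) (φV (t' e)) ∧
      ∀ a ∈ (φA e).dropLast, t a ∉ Set.range φV) ∧
    (∀ a ∈ A₀, ∃! e : A', a ∈ φA e)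

/-- A rooted binary phylogenetic `X`-tree: a binary phylogenetic network over `X`
with no vertices of in-degree 2. -/
def IsPhyloTree {X : Type u1} {V : Type u2} {A : Type u3}
    (T : PhyloNetwork X V A) : Prop :=
  ∀ v : V, InDeg T.tgt v ≠ 2

/-- `N` is based on the tree `T`: `N` has a support tree `S` such that `(V, S)` is a
subdivision of `T`, matching roots and leaf labels. -/
def BasedOn {X : Type u1} {V : Type u2} {A : Type u3} {V' : Type u4} {A' : Type u5}
    (N : PhyloNetwork X V A) (T : PhyloNetwork X V' A') : Prop :=
  ∃ (S : Set A) (φV : V' → V),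
    N.IsSupportTree S ∧
    SubdivOn N.src N.tgt Set.univ S T.src T.tgt φV ∧
    φV T.root = N.root ∧
    ∀ x : X, φV (T.leafEmb x) = N.leafEmb x

/-- `N` displays the tree `T`: there are `V₀ ⊆ V` and `A₀ ⊆ A` forming a rooted
directed tree whose out-degree-0 vertices are exactly the leaves of `N`, such that
`T` is obtained from `(V₀, A₀)` by repeatedly suppressing vertices of in-degree 1 and
out-degree 1 and deleting the root together with its outgoing arc so long as the root
has out-degree 1 (the deleted root chain is the path `p₀`). -/
def Displays {X : Type u1} {V : Type u2} {A : Type u3} {V' : Type u4} {A' : Type u5}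
    (N : PhyloNetwork X V A) (T : PhyloNetwork X V' A') : Prop :=
  ∃ (V₀ : Set V) (A₀ : Set A) (r₀ : V) (φV : V' → V) (p₀ : List A) (φA : A' → List A),
    IsRootedTreeOn N.src N.tgt V₀ A₀ r₀ ∧
    (∀ v ∈ V₀, OutDegIn N.src A₀ v = 0 ↔ v ∈ N.leaves) ∧
    Function.Injective φV ∧
    (∀ v' : V', φV v' ∈ V₀) ∧
    (∀ x : X, φV (T.leafEmb x) = N.leafEmb x) ∧
    p₀.Nodup ∧ (∀ a ∈ p₀, a ∈ A₀) ∧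
    ArcWalk N.src N.tgt r₀ p₀ (φV T.root) ∧
    (∀ a ∈ p₀, OutDegIn N.src A₀ (N.src a) = 1 ∧ N.src a ∉ Set.range φV) ∧
    (∀ e : A', φA e ≠ [] ∧ (φA e).Nodup ∧ (∀ a ∈ φA e, a ∈ A₀) ∧
      ArcWalk N.src N.tgt (φV (T.src e)) (φA e) (φV (T.tgt e)) ∧
      ∀ a ∈ (φA e).dropLast, N.tgt a ∉ Set.range φV) ∧
    (∀ a ∈ A₀, (a ∈ p₀ ∧ ∀ e : A', a ∉ φA e) ∨ (a ∉ p₀ ∧ ∃! e : A', a ∈ φA e))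

/-- The vertices of `N` having a directed path (possibly trivial) to a vertex in `L`. -/
def KeepV {X : Type u1} {V : Type u2} {A : Type u3}
    (N : PhyloNetwork X V A) (L : Set V) : Set V :=
  {v : V | ∃ (p : List A) (w : V), w ∈ L ∧ ArcWalk N.src N.tgt v p w}

/-- The arcs of `N` lying on a directed path ending at a vertex in `L`. -/
def KeepA {X : Type u1} {V : Type u2} {A : Type u3}
    (N : PhyloNetwork X V A) (L : Set V) : Set A :=
  {a : A | ∃ (p : List A) (w : V), w ∈ L ∧ ArcWalk N.src N.tgt (N.tgt a) p w}


section FSaux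
variable {V : Type u2} {A : Type u3} {s t : A → V}

lemma arcwalk_nil_eq {u w : V} (h : ArcWalk s t u [] w) : u = w := by cases h; rfl

lemma arcwalk_snoc {u w : V} {p : List A} (hp : ArcWalk s t u p w) (a : A) (ha : s a = w) :
    ArcWalk s t u (p ++ [a]) (t a) := by
  induction hp with
  | nil v => exact ArcWalk.cons ha (ArcWalk.nil _)
  | cons h1 h2 ih => exact ArcWalk.cons h1 (ih ha)

lemma arcwalk_last {u w : V} {p : List A} (hp : ArcWalk s t u p w) (hne : p ≠ []) :
    ∃ q a, p = q ++ [a] ∧ ArcWalk s t u q (s a) ∧ t a = w := by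
  induction hp with
  | nil v => exact absurd rfl hne
  | @cons u' w' b q h1 h2 ih =>
    by_cases hq0 : q = []
    · subst hq0
      refine ⟨[], b, rfl, ?_, arcwalk_nil_eq h2⟩
      rw [h1]; exact ArcWalk.nil _
    · obtain ⟨q', c, rfl, hq, hc⟩ := ih hq0
      exact ⟨b :: q', c, rfl, ArcWalk.cons h1 hq, hc⟩

lemma indeg_eq_card [Fintype A] [DecidableEq V] (v : V) :
    InDeg t v = (Finset.univ.filter (fun a : A => t a = v)).card := by
  classical
  rw [InDeg, ← Set.ncard_coe_finset]
  congr 1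
  ext a; simp

lemma outdeg_eq_card [Fintype A] [DecidableEq V] (v : V) :
    OutDeg s v = (Finset.univ.filter (fun a : A => s a = v)).card := by
  classical
  rw [OutDeg, ← Set.ncard_coe_finset]
  congr 1
  ext a; simp

end FSaux

/-- If every in-degree-2 vertex of `N` has both parents of
out-degree 2, then `N` is tree-based. -/
theorem statement_8 {X : Type u1} {V : Type u2} {A : Type u3} (N : PhyloNetwork X V A)
    (h : ∀ v : V, InDeg N.tgt v = 2 → ∀ a : A, N.tgt a = v → OutDeg N.src (N.src a) = 2) :
    N.TreeBased := by
  classical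
  haveI := N.finV; haveI := N.finA
  haveI : Fintype V := Fintype.ofFinite V
  haveI : Fintype A := Fintype.ofFinite A
  -- basic degree facts
  have indeg_le2 : ∀ v : V, InDeg N.tgt v ≤ 2 := by
    intro v
    by_cases hr : v = N.root
    · rw [hr, N.root_indeg]; omega
    by_cases hl : ∃ x : X, N.leafEmb x = v
    · obtain ⟨x, rfl⟩ := hl; rw [N.leaf_indeg]; omega
    · rcases N.deg_other v hr hl with ⟨h1, _⟩ | ⟨h1, _⟩ <;> omega
  have indeg_cases : ∀ v : V, v ≠ N.root → InDeg N.tgt v = 1 ∨ InDeg N.tgt v = 2 := by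
    intro v hr
    by_cases hl : ∃ x : X, N.leafEmb x = v
    · obtain ⟨x, rfl⟩ := hl; exact Or.inl (N.leaf_indeg x)
    · rcases N.deg_other v hr hl with ⟨h1, _⟩ | ⟨h1, _⟩
      · exact Or.inr h1
      · exact Or.inl h1
  -- Hall's theorem: choose an injective parent map for reticulations
  let R := {v : V // InDeg N.tgt v = 2}
  let tset : R → Finset V :=
    fun v => Finset.univ.filter (fun u => ∃ a : A, N.src a = u ∧ N.tgt a = v.1)
  have hall : ∀ s : Finset R, s.card ≤ (s.biUnion tset).card := by
    intro s
    set E : Finset A := Finset.univ.filter (fun a => ∃ v ∈ s, N.tgt a = v.1) with hE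
    have h1 : 2 * s.card ≤ E.card := by
      have hsub : s.biUnion (fun v => Finset.univ.filter (fun a : A => N.tgt a = v.1)) ⊆ E := by
        intro a ha
        simp only [Finset.mem_biUnion, Finset.mem_filter, Finset.mem_univ, true_and, hE] at ha ⊢
        exact ha
      have hdisj : ∀ v ∈ s, ∀ w ∈ s, v ≠ w →
          Disjoint (Finset.univ.filter (fun a : A => N.tgt a = v.1))
            (Finset.univ.filter (fun a : A => N.tgt a = w.1)) := by
        intro v _ w _ hvw
        refine Finset.disjoint_left.mpr ?_
        intro a hav haw
        simp only [Finset.mem_filter, Finset.mem_univ, true_and] at hav haw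
        exact hvw (Subtype.ext (hav ▸ haw))
      have hcard : (s.biUnion (fun v => Finset.univ.filter (fun a : A => N.tgt a = v.1))).card
          = 2 * s.card := by
        rw [Finset.card_biUnion hdisj]
        have heach : ∀ v ∈ s, (Finset.univ.filter (fun a : A => N.tgt a = v.1)).card = 2 := by
          intro v _
          have : ((Finset.univ.filter (fun a : A => N.tgt a = v.1)) : Set A).ncard
              = InDeg N.tgt v.1 := by
            rw [InDeg]; congr 1; ext a; simp
          rw [Set.ncard_coe_finset] at this
          rw [this]; exact v.2
        rw [Finset.sum_congr rfl heach, Finset.sum_const, smul_eq_mul, mul_comm]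
      rw [← hcard]
      exact Finset.card_le_card hsub
    have h2 : E.card ≤ 2 * (s.biUnion tset).card := by
      refine Finset.card_le_mul_card_image_of_maps_to (f := N.src) ?_ 2 ?_
      · intro a ha
        simp only [hE, Finset.mem_filter, Finset.mem_univ, true_and] at ha
        obtain ⟨v, hv, hav⟩ := ha
        refine Finset.mem_biUnion.mpr ⟨v, hv, ?_⟩
        simp only [tset, Finset.mem_filter, Finset.mem_univ, true_and]
        exact ⟨a, rfl, hav⟩
      · intro u hu
        have hout : OutDeg N.src u = 2 := by
          rw [Finset.mem_biUnion] at hu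
          obtain ⟨v, _, hv⟩ := hu
          simp only [tset, Finset.mem_filter, Finset.mem_univ, true_and] at hv
          obtain ⟨a, hau, hav⟩ := hv
          have := h v.1 v.2 a hav
          rwa [hau] at this
        have hsub2 : (E.filter (fun a => N.src a = u)) ⊆
            Finset.univ.filter (fun a : A => N.src a = u) := by
          intro a ha
          simp only [Finset.mem_filter] at ha ⊢
          exact ⟨Finset.mem_univ _, ha.2⟩
        calc (E.filter (fun a => N.src a = u)).card
            ≤ (Finset.univ.filter (fun a : A => N.src a = u)).card := Finset.card_le_card hsub2
          _ = 2 := by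
              have : ((Finset.univ.filter (fun a : A => N.src a = u)) : Set A).ncard
                  = OutDeg N.src u := by
                rw [OutDeg]; congr 1; ext a; simp
              rw [Set.ncard_coe_finset] at this
              rw [this]; exact hout
    have := h1.trans h2
    omega
  obtain ⟨f, finj, hf⟩ := (Finset.all_card_le_biUnion_card_iff_exists_injective tset).mp hall
  have hf' : ∀ v : R, ∃ a : A, N.src a = f v ∧ N.tgt a = v.1 := by
    intro v
    have := hf v
    simpa only [tset, Finset.mem_filter, Finset.mem_univ, true_and] using this
  let d : R → A := fun v => (hf' v).choose
  have hd1 : ∀ v : R, N.src (d v) = f v := fun v => (hf' v).choose_spec.1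
  have hd2 : ∀ v : R, N.tgt (d v) = v.1 := fun v => (hf' v).choose_spec.2
  -- the support tree
  set S : Set A := {a | ∀ v : R, a ≠ d v} with hS
  have hSmem : ∀ a : A, a ∈ S ↔ ∀ v : R, a ≠ d v := fun a => Iff.rfl
  -- uniqueness of S-in-arcs
  have hSin_unique : ∀ a b : A, a ∈ S → b ∈ S → N.tgt a = N.tgt b → a = b := by
    intro a b ha hb hab
    by_contra hne
    have h2 : InDeg N.tgt (N.tgt a) = 2 := by
      have hle : 2 ≤ InDeg N.tgt (N.tgt a) := by
        have hsub : ({a, b} : Set A) ⊆ {c | N.tgt c = N.tgt a} := by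
          rintro c (rfl | rfl)
          · rfl
          · exact hab.symm
        calc 2 = ({a, b} : Set A).ncard := (Set.ncard_pair hne).symm
          _ ≤ _ := Set.ncard_le_ncard hsub (Set.toFinite _)
      have := indeg_le2 (N.tgt a)
      omega
    set vr : R := ⟨N.tgt a, h2⟩ with hvr
    have hda : d vr ≠ a := fun hh => ((hSmem a).mp ha vr) hh.symm
    have hdb : d vr ≠ b := fun hh => ((hSmem b).mp hb vr) hh.symm
    have h3 : 3 ≤ InDeg N.tgt (N.tgt a) := by
      have hsub : ({a, b, d vr} : Set A) ⊆ {c | N.tgt c = N.tgt a} := by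
        rintro c (rfl | rfl | rfl)
        · rfl
        · exact hab.symm
        · exact hd2 vr
      have h3' : ({a, b, d vr} : Set A).ncard = 3 :=
        Set.ncard_eq_three.mpr ⟨a, b, d vr, hne, Ne.symm hda, Ne.symm hdb, rfl⟩
      calc 3 = ({a, b, d vr} : Set A).ncard := h3'.symm
        _ ≤ _ := Set.ncard_le_ncard hsub (Set.toFinite _)
    omega
  -- every non-root vertex has an S-in-arc
  have hSin_exists : ∀ v : V, v ≠ N.root → ∃ a ∈ S, N.tgt a = v := by
    intro v hr
    rcases indeg_cases v hr with h1 | h2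
    · obtain ⟨a, hset⟩ := Set.ncard_eq_one.mp h1
      have hta : N.tgt a = v := by
        have : a ∈ {c | N.tgt c = v} := by rw [hset]; rfl
        exact this
      refine ⟨a, (hSmem a).mpr ?_, hta⟩
      intro w hw
      have hta' := hta
      rw [hw, hd2 w] at hta'
      rw [← hta'] at h1
      have := w.2
      omega
    · obtain ⟨a, b, hne, hset⟩ := Set.ncard_eq_two.mp h2
      set vr : R := ⟨v, h2⟩ with hvr
      have hdin : d vr ∈ ({a, b} : Set A) := by
        rw [← hset]
        exact (hd2 vr : N.tgt (d vr) = v)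
      have haT : N.tgt a = v := by
        have : a ∈ {c | N.tgt c = v} := by rw [hset]; exact Set.mem_insert _ _
        exact this
      have hbT : N.tgt b = v := by
        have : b ∈ {c | N.tgt c = v} := by
          rw [hset]; exact Set.mem_insert_iff.mpr (Or.inr rfl)
        exact this
      have key : ∀ c : A, N.tgt c = v → c ≠ d vr → c ∈ S := by
        intro c hc hcd
        refine (hSmem c).mpr ?_
        intro w hcw
        have hwv : w.1 = v := by rw [← hd2 w, ← hcw, hc]
        have hwvr : w = vr := Subtype.ext hwv
        rw [hwvr] at hcw
        exact hcd hcw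
      rcases hdin with hda | hdb
      · refine ⟨b, key b hbT ?_, hbT⟩
        intro hh
        rw [hda] at hh
        exact hne hh.symm
      · refine ⟨a, key a haT ?_, haT⟩
        intro hh
        rw [hdb] at hh
        exact hne hh
  -- every non-leaf vertex keeps an out-arc
  have hSout : ∀ v : V, v ∉ N.leaves → ∃ a ∈ S, N.src a = v := by
    intro v hv
    have hnl : ¬ ∃ x : X, N.leafEmb x = v := by
      rintro ⟨x, rfl⟩; exact hv ⟨x, rfl⟩
    have hod : OutDeg N.src v = 1 ∨ OutDeg N.src v = 2 := by
      by_cases hr : v = N.root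
      · rw [hr]; exact N.root_outdeg
      · rcases N.deg_other v hr hnl with ⟨_, h1⟩ | ⟨_, h1⟩
        · exact Or.inl h1
        · exact Or.inr h1
    rcases hod with h1 | h2
    · obtain ⟨a, hset⟩ := Set.ncard_eq_one.mp h1
      have hsa : N.src a = v := by
        have : a ∈ {c | N.src c = v} := by rw [hset]; rfl
        exact this
      refine ⟨a, (hSmem a).mpr ?_, hsa⟩
      intro w hw
      have ho2 : OutDeg N.src (N.src (d w)) = 2 := h w.1 w.2 (d w) (hd2 w)
      rw [← hw, hsa] at ho2
      omega
    · obtain ⟨a, b, hne, hset⟩ := Set.ncard_eq_two.mp h2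
      have hsa : N.src a = v := by
        have : a ∈ {c | N.src c = v} := by rw [hset]; exact Set.mem_insert _ _
        exact this
      have hsb : N.src b = v := by
        have : b ∈ {c | N.src c = v} := by
          rw [hset]; exact Set.mem_insert_iff.mpr (Or.inr rfl)
        exact this
      by_cases haS : a ∈ S
      · exact ⟨a, haS, hsa⟩
      by_cases hbS : b ∈ S
      · exact ⟨b, hbS, hsb⟩
      exfalso
      have ha' : ∃ w : R, a = d w := by
        by_contra hcon
        push_neg at hcon
        exact haS ((hSmem a).mpr hcon)
      have hb' : ∃ w : R, b = d w := by
        by_contra hcon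
        push_neg at hcon
        exact hbS ((hSmem b).mpr hcon)
      obtain ⟨w1, rfl⟩ := ha'
      obtain ⟨w2, rfl⟩ := hb'
      have hff : f w1 = f w2 := by rw [← hd1 w1, ← hd1 w2, hsa, hsb]
      exact hne (congrArg d (finj hff))
  -- the ancestor measure
  let m : V → ℕ := fun v => {u | ∃ p : List A, ArcWalk N.src N.tgt u p v}.ncard
  have hm : ∀ a : A, m (N.src a) < m (N.tgt a) := by
    intro a
    refine Set.ncard_lt_ncard ⟨?_, ?_⟩ (Set.toFinite _)
    · rintro u ⟨p, hp⟩
      exact ⟨p ++ [a], arcwalk_snoc hp a rfl⟩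
    · intro hsub
      obtain ⟨p, hp⟩ := hsub ⟨[], ArcWalk.nil _⟩
      exact N.acyclic (N.tgt a) (p ++ [a]) (by simp) (arcwalk_snoc hp a rfl)
  -- the main induction: unique S-paths from the root
  have key : ∀ n : ℕ, ∀ v : V, m v ≤ n →
      ∃! p : List A, (∀ a ∈ p, a ∈ S) ∧ ArcWalk N.src N.tgt N.root p v := by
    intro n
    induction n with
    | zero =>
      intro v hv
      exfalso
      have : 0 < m v := (Set.ncard_pos (Set.toFinite _)).mpr ⟨v, [], ArcWalk.nil v⟩
      omega
    | succ n ih =>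
      intro v hv
      by_cases hroot : v = N.root
      · subst hroot
        refine ⟨[], ⟨by simp, ArcWalk.nil _⟩, ?_⟩
        rintro q ⟨hq, hwalk⟩
        by_contra hne
        exact N.acyclic N.root q hne hwalk
      · obtain ⟨a₀, ha₀S, ha₀t⟩ := hSin_exists v hroot
        have hlt : m (N.src a₀) ≤ n := by
          have := hm a₀
          rw [ha₀t] at this
          omega
        obtain ⟨p₀, ⟨hp₀S, hp₀w⟩, hp₀u⟩ := ih (N.src a₀) hlt
        refine ⟨p₀ ++ [a₀], ⟨?_, ?_⟩, ?_⟩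
        · intro a ha
          rcases List.mem_append.mp ha with h' | h'
          · exact hp₀S a h'
          · rw [List.mem_singleton.mp h']
            exact ha₀S
        · have := arcwalk_snoc hp₀w a₀ rfl
          rwa [ha₀t] at this
        · rintro q ⟨hqS, hqw⟩
          have hqne : q ≠ [] := by
            rintro rfl
            exact hroot (arcwalk_nil_eq hqw).symm
          obtain ⟨q', b, rfl, hq', hb⟩ := arcwalk_last hqw hqne
          have hbS : b ∈ S := hqS b (by simp)
          have hba : b = a₀ := hSin_unique b a₀ hbS ha₀S (hb.trans ha₀t.symm)
          subst hba
          have hq'p : q' = p₀ := hp₀u q' ⟨fun a ha => hqS a (by simp [ha]), hq'⟩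
          rw [hq'p]
  -- leaves are exactly the S-sinks
  have hleafout : ∀ v : V, OutDegIn N.src S v = 0 ↔ v ∈ N.leaves := by
    intro v
    constructor
    · intro h0
      by_contra hv
      obtain ⟨a, haS, hav⟩ := hSout v hv
      rw [OutDegIn, Set.ncard_eq_zero (Set.toFinite _)] at h0
      exact absurd (h0 ▸ (⟨haS, hav⟩ : a ∈ {c | c ∈ S ∧ N.src c = v})) (Set.notMem_empty a)
    · rintro ⟨x, rfl⟩
      have h0 : OutDeg N.src (N.leafEmb x) = 0 := (N.leaf_iff _).mp ⟨x, rfl⟩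
      rw [OutDeg, Set.ncard_eq_zero (Set.toFinite _)] at h0
      rw [OutDegIn, Set.ncard_eq_zero (Set.toFinite _)]
      ext a
      simp only [Set.mem_setOf_eq, Set.mem_empty_iff_false, iff_false]
      rintro ⟨-, hav⟩
      exact absurd (h0 ▸ (hav : a ∈ {c | N.src c = N.leafEmb x})) (Set.notMem_empty a)
  exact ⟨S, fun v => key (m v) v le_rfl, hleafout⟩
end

section
/- Let N be a binary phylogenetic network over a finite leaf set X. If N has a vertex of in-degree 2 whose two parents are distinct and both have out-degree 1, then N is not tree-based. -/
/-! Directed multigraphs, walks, and binary phylogenetic networks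
(following Francis & Steel, "Which phylogenetic networks are merely
trees with additional arcs?"). -/

universe u1 u2 u3 u4 u5 u6 u7

lemma ArcWalk.append_one {V : Type u2} {A : Type u3} {s t : A → V} {u w : V} {p : List A}
    (h : ArcWalk s t u p w) {a : A} (ha : s a = w) :
    ArcWalk s t u (p ++ [a]) (t a) := by
  induction h with
  | nil v => exact ArcWalk.cons ha (ArcWalk.nil _)
  | cons hs _ ih => exact ArcWalk.cons hs (ih ha)

/-- If `N` has an in-degree-2 vertex whose two parents are distinct
and both have out-degree 1, then `N` is not tree-based. -/
theorem statement_9 {X : Type u1} {V : Type u2} {A : Type u3} (N : PhyloNetwork X V A)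
    (h : ∃ (v : V) (a b : A), InDeg N.tgt v = 2 ∧ N.tgt a = v ∧ N.tgt b = v ∧
      N.src a ≠ N.src b ∧ OutDeg N.src (N.src a) = 1 ∧ OutDeg N.src (N.src b) = 1) :
    ¬ N.TreeBased := by
  obtain ⟨v, a, b, hv, hta, htb, hsab, ha1, hb1⟩ := h
  rintro ⟨S, htree, hleaf⟩
  have hab : a ≠ b := fun h => hsab (by rw [h])
  have key : ∀ c : A, OutDeg N.src (N.src c) = 1 → c ∈ S := by
    intro c hc
    have hnl : N.src c ∉ N.leaves := by
      rintro ⟨x, hx⟩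
      have := (N.leaf_iff (N.src c)).mp ⟨x, hx⟩
      rw [this] at hc; exact one_ne_zero hc.symm
    have h0 : OutDegIn N.src S (N.src c) ≠ 0 := fun h0 => hnl ((hleaf _).mp h0)
    have hne : {d : A | d ∈ S ∧ N.src d = N.src c}.Nonempty :=
      Set.nonempty_of_ncard_ne_zero h0
    obtain ⟨d, hdS, hd⟩ := hne
    obtain ⟨x, hx⟩ := Set.ncard_eq_one.mp hc
    have hcx : c ∈ ({x} : Set A) := hx ▸ (show c ∈ {d : A | N.src d = N.src c} from rfl)
    have hdx : d ∈ ({x} : Set A) := hx ▸ (show d ∈ {e : A | N.src e = N.src c} from hd)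
    have : c = d := by
      simp only [Set.mem_singleton_iff] at hcx hdx
      rw [hcx, hdx]
    exact this ▸ hdS
  have haS := key a ha1
  have hbS := key b hb1
  obtain ⟨pa, ⟨hpaS, hpaW⟩, -⟩ := htree (N.src a)
  obtain ⟨pb, ⟨hpbS, hpbW⟩, -⟩ := htree (N.src b)
  obtain ⟨pv, hpv, huniq⟩ := htree v
  have w1 := hpaW.append_one (a := a) rfl
  have w2 := hpbW.append_one (a := b) rfl
  rw [hta] at w1; rw [htb] at w2
  have e1 := huniq (pa ++ [a]) ⟨by
    intro x hx
    rcases List.mem_append.mp hx with h | h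
    · exact hpaS _ h
    · simp only [List.mem_singleton] at h; exact h ▸ haS, w1⟩
  have e2 := huniq (pb ++ [b]) ⟨by
    intro x hx
    rcases List.mem_append.mp hx with h | h
    · exact hpbS _ h
    · simp only [List.mem_singleton] at h; exact h ▸ hbS, w2⟩
  have heq : pa ++ [a] = pb ++ [b] := e1.trans e2.symm
  have := (List.append_inj' heq rfl).2
  exact hab (by simpa using this)
end

section
/- Every tree-sibling binary phylogenetic network is tree-based. -/
/-! Directed multigraphs, walks, and binary phylogenetic networks
(following Francis & Steel, "Which phylogenetic networks are merely
trees with additional arcs?"). -/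

universe u1 u2 u3 u4 u5 u6 u7

private lemma arcWalk_append' {V : Type u2} {A : Type u3} {s t : A → V} {p : List A} {u v : V}
    (h1 : ArcWalk s t u p v) :
    ∀ {q : List A} {w : V}, ArcWalk s t v q w → ArcWalk s t u (p ++ q) w := by
  induction h1 with
  | nil => intro q w h2; exact h2
  | cons hs _ ih => intro q w h2; exact ArcWalk.cons hs (ih h2)

private lemma arcWalk_concat_inv' {V : Type u2} {A : Type u3} {s t : A → V} :
    ∀ (p : List A) (u v : V) (x : A), ArcWalk s t u (p ++ [x]) v →
      ArcWalk s t u p (s x) ∧ t x = v := by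
  intro p
  induction p with
  | nil =>
    intro u v x hh
    cases hh with
    | cons hs hw =>
      cases hw
      exact ⟨by rw [← hs]; exact ArcWalk.nil _, rfl⟩
  | cons y p ih =>
    intro u v x hh
    cases hh with
    | cons hs hw =>
      obtain ⟨h1, h2⟩ := ih _ _ _ hw
      exact ⟨ArcWalk.cons hs h1, h2⟩

/-- Every tree-sibling binary phylogenetic network is tree-based:
if every in-degree-2 vertex `v` has a sibling `v'` (a distinct vertex sharing a
parent with `v`) of in-degree 1, then `N` is tree-based. -/
theorem statement_10 {X : Type u1} {V : Type u2} {A : Type u3} (N : PhyloNetwork X V A)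
    (h : ∀ v : V, InDeg N.tgt v = 2 →
      ∃ v' : V, v' ≠ v ∧ InDeg N.tgt v' = 1 ∧
        ∃ a b : A, N.src a = N.src b ∧ N.tgt a = v ∧ N.tgt b = v') :
    N.TreeBased := by
  classical
  have _ : Finite A := N.finA
  have _ : Finite V := N.finV
  choose w hwne hwdeg ar br hab hta htb using h
  let f : V → Option A := fun v => if hv : InDeg N.tgt v = 2 then some (ar v hv) else none
  let S : Set A := {x : A | f (N.tgt x) ≠ some x}
  have hmemS : ∀ x : A, x ∈ S ↔ f (N.tgt x) ≠ some x := fun x => Iff.rfl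
  have hf_eq : ∀ (v : V) (hv : InDeg N.tgt v = 2), f v = some (ar v hv) := by
    intro v hv; simp only [f]; rw [dif_pos hv]
  have hf_ne : ∀ v : V, InDeg N.tgt v ≠ 2 → f v = none := by
    intro v hv; simp only [f]; rw [dif_neg hv]
  have hS_ne2 : ∀ x : A, InDeg N.tgt (N.tgt x) ≠ 2 → x ∈ S := by
    intro x hx
    rw [hmemS, hf_ne _ hx]; simp
  have hnotS : ∀ x : A, x ∉ S → ∃ hv : InDeg N.tgt (N.tgt x) = 2, x = ar (N.tgt x) hv := by
    intro x hx
    by_cases hv : InDeg N.tgt (N.tgt x) = 2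
    · refine ⟨hv, ?_⟩
      rw [hmemS, not_ne_iff, hf_eq _ hv] at hx
      exact (Option.some.inj hx).symm
    · exact absurd (hS_ne2 x hv) hx
  have hdelD : ∀ (v : V) (hv : InDeg N.tgt v = 2), ar v hv ∉ S := by
    intro v hv
    rw [hmemS, not_ne_iff, hta v hv, hf_eq v hv]
  have hotherS : ∀ (v : V) (hv : InDeg N.tgt v = 2) (x : A),
      N.tgt x = v → x ≠ ar v hv → x ∈ S := by
    intro v hv x hxv hxne
    rw [hmemS, hxv, hf_eq v hv]
    exact fun hc => hxne (Option.some.inj hc).symm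
  -- root has no incoming arcs at all
  have hroot_noin : ∀ x : A, N.tgt x ≠ N.root := by
    intro x hx
    have h0 := N.root_indeg
    unfold InDeg at h0
    have hempty := (Set.ncard_eq_zero (Set.toFinite _)).mp h0
    have : x ∈ {a : A | N.tgt a = N.root} := hx
    rw [hempty] at this
    exact this
  -- unique incoming S-arc for non-root vertices
  have huniq_in : ∀ v : V, v ≠ N.root → ∃! x : A, x ∈ S ∧ N.tgt x = v := by
    intro v hvroot
    have hIn : InDeg N.tgt v = 1 ∨ InDeg N.tgt v = 2 := by
      by_cases hleaf : ∃ x0 : X, N.leafEmb x0 = v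
      · left; obtain ⟨x0, rfl⟩ := hleaf; exact N.leaf_indeg x0
      · rcases N.deg_other v hvroot hleaf with ⟨h1, _⟩ | ⟨h1, _⟩
        · right; exact h1
        · left; exact h1
    rcases hIn with h1 | h2
    · have h1' := h1
      unfold InDeg at h1'
      obtain ⟨e, he⟩ := (Set.ncard_eq_one).mp h1'
      have het : N.tgt e = v := by
        have : e ∈ {a : A | N.tgt a = v} := by rw [he]; rfl
        exact this
      have heS : e ∈ S := hS_ne2 e (by rw [het, h1]; omega)
      refine ⟨e, ⟨heS, het⟩, ?_⟩
      rintro y ⟨-, hyt⟩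
      have : y ∈ {a : A | N.tgt a = v} := hyt
      rw [he] at this
      exact this
    · have h2' := h2
      unfold InDeg at h2'
      obtain ⟨a₁, a₂, hne, hset⟩ := (Set.ncard_eq_two).mp h2'
      have hd : ar v h2 ∈ ({a₁, a₂} : Set A) := by
        rw [← hset]; exact hta v h2
      obtain ⟨e, he_ne, he_pair⟩ :
          ∃ e : A, e ≠ ar v h2 ∧ ({x : A | N.tgt x = v} : Set A) = {ar v h2, e} := by
        simp only [Set.mem_insert_iff, Set.mem_singleton_iff] at hd
        rcases hd with hh | hh
        · refine ⟨a₂, ?_, ?_⟩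
          · rw [hh]; exact hne.symm
          · rw [hset, ← hh]
        · refine ⟨a₁, ?_, ?_⟩
          · rw [hh]; exact hne
          · rw [hset, ← hh, Set.pair_comm]
      have het : N.tgt e = v := by
        have : e ∈ ({ar v h2, e} : Set A) := by simp
        rw [← he_pair] at this
        exact this
      refine ⟨e, ⟨hotherS v h2 e het he_ne, het⟩, ?_⟩
      rintro y ⟨hyS, hyt⟩
      have : y ∈ ({ar v h2, e} : Set A) := by rw [← he_pair]; exact hyt
      rcases this with hh | hh
      · exact absurd hyS (by rw [hh]; exact hdelD v h2)
      · exact hh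
  -- well-foundedness of the parent relation
  have hwalkTG : ∀ u v : V,
      Relation.TransGen (fun a b : V => ∃ x : A, N.src x = a ∧ N.tgt x = b) u v →
      ∃ p : List A, p ≠ [] ∧ ArcWalk N.src N.tgt u p v := by
    intro u v htg
    induction htg with
    | single hr =>
      obtain ⟨x, hs, ht⟩ := hr
      exact ⟨[x], by simp, ArcWalk.cons hs (by rw [ht]; exact ArcWalk.nil _)⟩
    | tail _ hr ih =>
      obtain ⟨x, hs, ht⟩ := hr
      obtain ⟨p, hpne, hp⟩ := ih
      exact ⟨p ++ [x], by simp, arcWalk_append' hp (ArcWalk.cons hs (by rw [ht]; exact ArcWalk.nil _))⟩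
  have hwf : WellFounded (fun a b : V => ∃ x : A, N.src x = a ∧ N.tgt x = b) := by
    have hirr : IsIrrefl V (Relation.TransGen (fun a b : V => ∃ x : A, N.src x = a ∧ N.tgt x = b)) := by
      constructor
      intro v hv
      obtain ⟨p, hpne, hp⟩ := hwalkTG v v hv
      exact N.acyclic v p hpne hp
    have hwfT : WellFounded (Relation.TransGen (fun a b : V => ∃ x : A, N.src x = a ∧ N.tgt x = b)) :=
      Finite.wellFounded_of_trans_of_irrefl _
    exact Subrelation.wf (fun hr => Relation.TransGen.single hr) hwfT
  -- the rooted tree property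
  have htree : ∀ v : V, ∃! p : List A,
      (∀ x ∈ p, x ∈ S) ∧ ArcWalk N.src N.tgt N.root p v := by
    intro v
    induction v using WellFounded.induction hwf with
    | _ v IH =>
      by_cases hvr : v = N.root
      · subst hvr
        refine ⟨[], ⟨by simp, ArcWalk.nil _⟩, ?_⟩
        rintro q ⟨hqS, hq⟩
        by_contra hne
        exact N.acyclic _ q hne hq
      · obtain ⟨e, ⟨heS, het⟩, heu⟩ := huniq_in v hvr
        obtain ⟨p, ⟨hpS, hp⟩, hpu⟩ := IH (N.src e) ⟨e, rfl, het⟩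
        refine ⟨p ++ [e], ⟨?_, ?_⟩, ?_⟩
        · intro x hx
          rcases List.mem_append.1 hx with hh | hh
          · exact hpS x hh
          · simp only [List.mem_singleton] at hh; rw [hh]; exact heS
        · exact arcWalk_append' hp (ArcWalk.cons rfl (by rw [het]; exact ArcWalk.nil _))
        · rintro q ⟨hqS, hq⟩
          have hqne : q ≠ [] := by
            rintro rfl
            cases hq
            exact hvr rfl
          rcases List.eq_nil_or_concat q with rfl | ⟨q', x, rfl⟩
          · exact absurd rfl hqne
          · rw [List.concat_eq_append] at hq
            obtain ⟨hq', hxv⟩ := arcWalk_concat_inv' q' _ _ _ hq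
            have hxS : x ∈ S := hqS x (by simp)
            have hxe : x = e := heu x ⟨hxS, hxv⟩
            subst hxe
            have hq'p : q' = p := hpu q' ⟨fun y hy => hqS y (by simp [hy]), hq'⟩
            rw [hq'p, List.concat_eq_append]
  -- leaf condition
  have hout : ∀ v : V, OutDegIn N.src S v = 0 ↔ v ∈ N.leaves := by
    intro v
    constructor
    · intro h0
      by_contra hv
      have hleaf : ¬ ∃ x0 : X, N.leafEmb x0 = v := fun ⟨x0, hx0⟩ => hv ⟨x0, hx0⟩
      have hod : OutDeg N.src v ≠ 0 := fun hc => hleaf ((N.leaf_iff v).mpr hc)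
      unfold OutDeg at hod
      have hne : ({x : A | N.src x = v} : Set A).Nonempty := by
        rw [Set.nonempty_iff_ne_empty]
        intro hc
        exact hod (by rw [hc]; exact Set.ncard_empty _)
      obtain ⟨x0, hx0⟩ := hne
      have hx0v : N.src x0 = v := hx0
      have hSout : ∃ y : A, y ∈ S ∧ N.src y = v := by
        by_cases hx0S : x0 ∈ S
        · exact ⟨x0, hx0S, hx0v⟩
        · obtain ⟨hv2, hx0eq⟩ := hnotS x0 hx0S
          refine ⟨br (N.tgt x0) hv2, ?_, ?_⟩
          · apply hS_ne2
            rw [htb, hwdeg]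
            omega
          · rw [← hab, ← hx0eq, hx0v]
      obtain ⟨y, hyS, hyv⟩ := hSout
      unfold OutDegIn at h0
      have hempty := (Set.ncard_eq_zero (Set.toFinite _)).mp h0
      have : y ∈ {x : A | x ∈ S ∧ N.src x = v} := ⟨hyS, hyv⟩
      rw [hempty] at this
      exact this
    · rintro ⟨x0, rfl⟩
      have hod0 : OutDeg N.src (N.leafEmb x0) = 0 := (N.leaf_iff _).mp ⟨x0, rfl⟩
      unfold OutDeg at hod0
      have h1 : ({x : A | N.src x = N.leafEmb x0} : Set A) = ∅ :=
        (Set.ncard_eq_zero (Set.toFinite _)).mp hod0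
      unfold OutDegIn
      have h2 : ({x : A | x ∈ S ∧ N.src x = N.leafEmb x0} : Set A) = ∅ := by
        ext y
        simp only [Set.mem_setOf_eq, Set.mem_empty_iff_false, iff_false, not_and]
        intro _ hy
        have : y ∈ ({x : A | N.src x = N.leafEmb x0} : Set A) := hy
        rw [h1] at this
        exact this
      rw [h2, Set.ncard_empty]
  exact ⟨S, htree, hout⟩
end

section
/- Every reticulation-visible binary phylogenetic network is tree-based. -/
/-! Directed multigraphs, walks, and binary phylogenetic networks
(following Francis & Steel, "Which phylogenetic networks are merely
trees with additional arcs?"). -/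

universe u1 u2 u3 u4 u5 u6 u7

/-! ### Auxiliary material for the proof of Statement 12 -/

namespace Statement12Aux

variable {X : Type u1} {V : Type u2} {A : Type u3}

section Walks

variable {s t : A → V}

theorem walk_nil_eq {u v : V} (h : ArcWalk s t u [] v) : u = v := by cases h; rfl

theorem walk_cons_iff {u v : V} {a : A} {p : List A} :
    ArcWalk s t u (a :: p) v ↔ s a = u ∧ ArcWalk s t (t a) p v := by
  constructor
  · intro h; cases h with | cons h1 h2 => exact ⟨h1, h2⟩
  · rintro ⟨h1, h2⟩; exact ArcWalk.cons h1 h2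

theorem walk_append {u v w : V} {p q : List A}
    (h1 : ArcWalk s t u p v) (h2 : ArcWalk s t v q w) : ArcWalk s t u (p ++ q) w := by
  induction h1 with
  | nil => simpa using h2
  | cons ha _ ih => exact ArcWalk.cons ha (ih h2)

theorem walk_append_iff {u w : V} {p q : List A} :
    ArcWalk s t u (p ++ q) w ↔ ∃ v, ArcWalk s t u p v ∧ ArcWalk s t v q w := by
  constructor
  · induction p generalizing u with
    | nil => intro h; exact ⟨u, ArcWalk.nil u, by simpa using h⟩
    | cons a p ih =>
      intro h
      rw [List.cons_append] at h
      rcases walk_cons_iff.1 h with ⟨h1, h2⟩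
      rcases ih h2 with ⟨v, hv1, hv2⟩
      exact ⟨v, ArcWalk.cons h1 hv1, hv2⟩
  · rintro ⟨v, h1, h2⟩; exact walk_append h1 h2

theorem walk_snoc_iff {u w : V} {p : List A} {a : A} :
    ArcWalk s t u (p ++ [a]) w ↔ ArcWalk s t u p (s a) ∧ t a = w := by
  rw [walk_append_iff]
  constructor
  · rintro ⟨v, h1, h2⟩
    rcases walk_cons_iff.1 h2 with ⟨hs, ht⟩
    have hv := walk_nil_eq ht
    subst hs; subst hv; exact ⟨h1, rfl⟩
  · rintro ⟨h1, h2⟩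
    exact ⟨s a, h1, ArcWalk.cons rfl (h2 ▸ ArcWalk.nil _)⟩

theorem walk_mem_split {u v : V} {p : List A} {a : A}
    (h : ArcWalk s t u p v) (ha : a ∈ p) :
    ∃ p1 p2, p = p1 ++ a :: p2 ∧ ArcWalk s t u p1 (s a) ∧ ArcWalk s t (t a) p2 v := by
  induction h with
  | nil => simp at ha
  | @cons u' w' b q hb hw ih =>
    rcases List.mem_cons.1 ha with rfl | ha'
    · exact ⟨[], q, rfl, hb ▸ ArcWalk.nil _, hw⟩
    · rcases ih ha' with ⟨p1, p2, rfl, h1, h2⟩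
      exact ⟨b :: p1, p2, rfl, ArcWalk.cons hb h1, h2⟩

end Walks

variable (N : PhyloNetwork X V A)

/-- The arc relation of the network. -/
def Rel (u v : V) : Prop := ∃ a : A, N.src a = u ∧ N.tgt a = v

theorem transGen_walk {u v : V} (h : Relation.TransGen (Rel N) u v) :
    ∃ p : List A, p ≠ [] ∧ ArcWalk N.src N.tgt u p v := by
  induction h with
  | single hr =>
    rcases hr with ⟨a, rfl, rfl⟩
    exact ⟨[a], by simp, ArcWalk.cons rfl (ArcWalk.nil _)⟩
  | tail _ hr ih =>
    rcases ih with ⟨p, hp, hw⟩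
    rcases hr with ⟨a, rfl, rfl⟩
    exact ⟨p ++ [a], by simp, walk_snoc_iff.2 ⟨hw, rfl⟩⟩

theorem wf : WellFounded (Relation.TransGen (Rel N)) := by
  have : Finite V := N.finV
  have : IsIrrefl V (Relation.TransGen (Rel N)) := ⟨fun v hv => by
    rcases transGen_walk N hv with ⟨p, hp, hw⟩
    exact N.acyclic v p hp hw⟩
  exact Finite.wellFounded_of_trans_of_irrefl _

theorem reach (v : V) : ∃ p : List A, ArcWalk N.src N.tgt N.root p v := by
  have : Finite A := N.finA
  refine (wf N).induction (C := fun v => ∃ p : List A, ArcWalk N.src N.tgt N.root p v) v ?_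
  intro v ih
  by_cases hv : v = N.root
  · subst hv; exact ⟨[], ArcWalk.nil _⟩
  · have hne : InDeg N.tgt v ≠ 0 := fun h0 => hv (N.root_unique v h0)
    obtain ⟨a, ha⟩ := Set.nonempty_of_ncard_ne_zero hne
    obtain ⟨p, hp⟩ := ih (N.src a) (Relation.TransGen.single ⟨a, rfl, ha⟩)
    exact ⟨p ++ [a], walk_snoc_iff.2 ⟨hp, ha⟩⟩

theorem root_noarc (b : A) : N.tgt b ≠ N.root := by
  have : Finite A := N.finA
  intro hb
  exact Set.ncard_ne_zero_of_mem (show b ∈ {c : A | N.tgt c = N.root} from hb) (Set.toFinite _) N.root_indeg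

/-- Any `S ⊆ A` such that every non-root vertex has a unique incoming `S`-arc and
every non-leaf vertex has an outgoing `S`-arc is a support tree. -/
theorem build (S : Set A)
    (P1 : ∀ v : V, v ≠ N.root → ∃! b : A, b ∈ S ∧ N.tgt b = v)
    (P3 : ∀ v : V, (¬∃ x : X, N.leafEmb x = v) → ∃ b ∈ S, N.src b = v) :
    N.IsSupportTree S := by
  have hFA : Finite A := N.finA
  constructor
  · -- rooted tree
    intro v
    have hex : ∀ w : V, ∃ p : List A, (∀ a ∈ p, a ∈ S) ∧ ArcWalk N.src N.tgt N.root p w := by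
      intro w
      refine (wf N).induction
        (C := fun w => ∃ p : List A, (∀ a ∈ p, a ∈ S) ∧ ArcWalk N.src N.tgt N.root p w) w ?_
      intro w ih
      by_cases hw : w = N.root
      · subst hw; exact ⟨[], by simp, ArcWalk.nil _⟩
      · obtain ⟨b, ⟨hbS, hbt⟩, -⟩ := P1 w hw
        obtain ⟨p, hpS, hpw⟩ := ih (N.src b) (Relation.TransGen.single ⟨b, rfl, hbt⟩)
        refine ⟨p ++ [b], ?_, walk_snoc_iff.2 ⟨hpw, hbt⟩⟩
        intro a ha
        rcases List.mem_append.1 ha with h | h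
        · exact hpS a h
        · rw [List.mem_singleton.1 h]; exact hbS
    have huniq : ∀ w : V, ∀ p q : List A, (∀ a ∈ p, a ∈ S) → ArcWalk N.src N.tgt N.root p w →
        (∀ a ∈ q, a ∈ S) → ArcWalk N.src N.tgt N.root q w → p = q := by
      intro w
      refine (wf N).induction
        (C := fun w => ∀ p q : List A, (∀ a ∈ p, a ∈ S) → ArcWalk N.src N.tgt N.root p w →
          (∀ a ∈ q, a ∈ S) → ArcWalk N.src N.tgt N.root q w → p = q) w ?_
      intro w ih p q hpS hpw hqS hqw
      rcases List.eq_nil_or_concat' p with rfl | ⟨p', b, rfl⟩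
      · have hw := walk_nil_eq hpw
        rcases List.eq_nil_or_concat' q with rfl | ⟨q', c, rfl⟩
        · rfl
        · exfalso
          obtain ⟨-, hc⟩ := walk_snoc_iff.1 hqw
          exact root_noarc N c (by rw [hc, ← hw])
      · obtain ⟨hpw', hb⟩ := walk_snoc_iff.1 hpw
        have hwroot : w ≠ N.root := fun hr => root_noarc N b (hb.trans hr)
        rcases List.eq_nil_or_concat' q with rfl | ⟨q', c, rfl⟩
        · exact absurd (walk_nil_eq hqw).symm hwroot
        · obtain ⟨hqw', hc⟩ := walk_snoc_iff.1 hqw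
          obtain ⟨b0, -, hb0⟩ := P1 w hwroot
          have hbb : b = b0 := hb0 b ⟨hpS b (by simp), hb⟩
          have hcb : c = b := (hb0 c ⟨hqS c (by simp), hc⟩).trans hbb.symm
          rw [hcb] at hqw' hc
          have hpq : p' = q' := ih (N.src b) (Relation.TransGen.single ⟨b, rfl, hb⟩) p' q'
            (fun a ha => hpS a (by simp [ha])) hpw'
            (fun a ha => hqS a (by simp [ha])) hqw'
          rw [hpq, hcb]
    obtain ⟨p, hp1, hp2⟩ := hex v
    exact ⟨p, ⟨hp1, hp2⟩, fun q hq => huniq v q p hq.1 hq.2 hp1 hp2⟩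
  · -- leaves
    intro v
    constructor
    · intro h0
      by_contra hv
      have hnl : ¬∃ x : X, N.leafEmb x = v := by
        intro ⟨x, hx⟩; exact hv ⟨x, hx⟩
      obtain ⟨b, hbS, hbv⟩ := P3 v hnl
      exact Set.ncard_ne_zero_of_mem
        (show b ∈ {a : A | a ∈ S ∧ N.src a = v} from ⟨hbS, hbv⟩) (Set.toFinite _) h0
    · rintro ⟨x, rfl⟩
      have h0 : OutDeg N.src (N.leafEmb x) = 0 := (N.leaf_iff _).1 ⟨x, rfl⟩
      have hempty : {b : A | N.src b = N.leafEmb x} = ∅ := (Set.ncard_eq_zero (Set.toFinite _)).mp h0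
      have hsub : {a : A | a ∈ S ∧ N.src a = N.leafEmb x} = ∅ := by
        ext b
        simp only [Set.mem_setOf_eq, Set.mem_empty_iff_false, iff_false, not_and]
        intro _ hb
        have : b ∈ {b : A | N.src b = N.leafEmb x} := hb
        rw [hempty] at this
        exact this
      show {a : A | a ∈ S ∧ N.src a = N.leafEmb x}.ncard = 0
      rw [hsub, Set.ncard_empty]

/-- Under reticulation visibility, every parent of a reticulation vertex is a
tree vertex (out-degree 2). -/
theorem key (h : ∀ v : V, InDeg N.tgt v = 2 →
      ∃ x : X, ∀ p : List A, ArcWalk N.src N.tgt N.root p (N.leafEmb x) →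
        v = N.root ∨ ∃ a ∈ p, N.tgt a = v)
    (a : A) (hr : InDeg N.tgt (N.tgt a) = 2) : OutDeg N.src (N.src a) = 2 := by
  have hFA : Finite A := N.finA
  -- the other incoming arc of `N.tgt a`
  obtain ⟨a1, a2, h12, hset⟩ := Set.ncard_eq_two.mp hr
  have hmem : ∀ b : A, N.tgt b = N.tgt a ↔ b ∈ ({a1, a2} : Set A) := fun b => by
    rw [← hset]; rfl
  obtain ⟨a', ha'ne, ha't⟩ : ∃ a' : A, a' ≠ a ∧ N.tgt a' = N.tgt a := by
    rcases (hmem a).1 rfl with rfl | rfl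
    · exact ⟨a2, fun e => h12 (by rw [e]), (hmem a2).2 (by simp)⟩
    · exact ⟨a1, fun e => h12 (by rw [e]), (hmem a1).2 (by simp)⟩
  have hune : OutDeg N.src (N.src a) ≠ 0 :=
    Set.ncard_ne_zero_of_mem (show a ∈ {b : A | N.src b = N.src a} from rfl) (Set.toFinite _)
  have hunl : ¬∃ x : X, N.leafEmb x = N.src a := fun hx => hune ((N.leaf_iff _).1 hx)
  by_cases hu : N.src a = N.root
  · rcases N.root_outdeg with h1 | h2
    · exfalso
      rw [← hu] at h1
      obtain ⟨c, hc⟩ := Set.ncard_eq_one.mp h1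
      have hca : ∀ b : A, N.src b = N.src a → b = c := fun b hb => by
        have hbmem : b ∈ {b' : A | N.src b' = N.src a} := hb
        rw [hc] at hbmem; exact hbmem
      have hac : a = c := hca a rfl
      have hwne : N.src a' ≠ N.root := by
        intro hw
        exact ha'ne ((hca a' (by rw [hw, ← hu])).trans hac.symm)
      obtain ⟨p, hp⟩ := reach N (N.src a')
      rcases List.eq_nil_or_concat' p with rfl | hcons
      · exact hwne (walk_nil_eq hp).symm
      · rcases p with _ | ⟨b, p'⟩
        · simp at hcons
        · obtain ⟨hbsrc, hbw⟩ := walk_cons_iff.1 hp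
          have hba : b = a := by
            rw [hac]; exact hca b (by rw [hbsrc, hu])
          rw [hba] at hbw
          exact N.acyclic (N.tgt a) (p' ++ [a']) (by simp)
            (walk_snoc_iff.2 ⟨hbw, ha't⟩)
    · rw [hu]; exact h2
  · rcases N.deg_other (N.src a) hu hunl with ⟨hin2, hout1⟩ | ⟨-, hout2⟩
    · exfalso
      obtain ⟨c, hc⟩ := Set.ncard_eq_one.mp hout1
      have hca : ∀ b : A, N.src b = N.src a → b = c := fun b hb => by
        have hbmem : b ∈ {b' : A | N.src b' = N.src a} := hb
        rw [hc] at hbmem; exact hbmem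
      have hac : a = c := hca a rfl
      obtain ⟨x, hx⟩ := h (N.src a) hin2
      have hrnu : N.tgt a ≠ N.src a := fun he =>
        N.acyclic (N.src a) [a] (by simp) (ArcWalk.cons rfl (he ▸ ArcWalk.nil _))
      obtain ⟨p0, hp0⟩ := reach N (N.leafEmb x)
      rcases hx p0 hp0 with hroot | ⟨b, hbp, hbt⟩
      · exact hu hroot
      obtain ⟨p1, p2, rfl, hw1, hw2⟩ := walk_mem_split hp0 hbp
      rw [hbt] at hw2
      have hux : N.src a ≠ N.leafEmb x := fun he =>
        hune (by rw [he]; exact (N.leaf_iff _).1 ⟨x, rfl⟩)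
      rcases p2 with _ | ⟨c2, p3⟩
      · exact hux (walk_nil_eq hw2)
      obtain ⟨hc2src, hp3⟩ := walk_cons_iff.1 hw2
      have hc2a : c2 = a := (hca c2 hc2src).trans hac.symm
      rw [hc2a] at hp3
      obtain ⟨q, hq⟩ := reach N (N.src a')
      have hwalk2 : ArcWalk N.src N.tgt N.root (q ++ a' :: p3) (N.leafEmb x) :=
        walk_append hq (ArcWalk.cons rfl (ha't ▸ hp3))
      rcases hx _ hwalk2 with hroot | ⟨b2, hb2mem, hb2t⟩
      · exact hu hroot
      rcases List.mem_append.1 hb2mem with hb2q | hb2r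
      · obtain ⟨q1, q2, rfl, -, hq2⟩ := walk_mem_split hq hb2q
        rw [hb2t] at hq2
        rcases q2 with _ | ⟨c3, q3⟩
        · exact ha'ne ((hca a' (walk_nil_eq hq2).symm).trans hac.symm)
        · obtain ⟨hc3src, hq3⟩ := walk_cons_iff.1 hq2
          have hc3a : c3 = a := (hca c3 hc3src).trans hac.symm
          rw [hc3a] at hq3
          exact N.acyclic (N.tgt a) (q3 ++ [a']) (by simp)
            (walk_snoc_iff.2 ⟨hq3, ha't⟩)
      · rcases List.mem_cons.1 hb2r with rfl | hb2p3
        · exact hrnu (ha't.symm.trans hb2t)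
        · obtain ⟨s1, s2, rfl, hs1, -⟩ := walk_mem_split hp3 hb2p3
          refine N.acyclic (N.src a) (a :: (s1 ++ [b2])) (by simp) ?_
          exact ArcWalk.cons rfl (walk_snoc_iff.2 ⟨hs1, hb2t⟩)
    · exact hout2

/-- The main construction: a reticulation-visible binary network is tree-based. -/
theorem main (N : PhyloNetwork X V A)
    (h : ∀ v : V, InDeg N.tgt v = 2 →
      ∃ x : X, ∀ p : List A, ArcWalk N.src N.tgt N.root p (N.leafEmb x) →
        v = N.root ∨ ∃ a ∈ p, N.tgt a = v) :
    N.TreeBased := by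
  classical
  have hFV : Finite V := N.finV
  have hFA : Finite A := N.finA
  letI : Fintype V := Fintype.ofFinite V
  letI : Fintype A := Fintype.ofFinite A
  have hkey : ∀ a : A, InDeg N.tgt (N.tgt a) = 2 → OutDeg N.src (N.src a) = 2 := key N h
  -- omnian vertices: tree vertices all of whose children are reticulations
  let ι := {u : V // OutDeg N.src u = 2 ∧ ∀ b : A, N.src b = u → InDeg N.tgt (N.tgt b) = 2}
  let tf : ι → Finset V := fun u => (Finset.univ.filter (fun b : A => N.src b = u.val)).image N.tgt
  have htf : ∀ (u : ι) (w : V), w ∈ tf u ↔ ∃ b : A, N.src b = u.val ∧ N.tgt b = w := by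
    intro u w
    constructor
    · intro hw
      have hw' : w ∈ (Finset.univ.filter (fun b : A => N.src b = u.val)).image N.tgt := hw
      obtain ⟨b, hb, rfl⟩ := Finset.mem_image.1 hw'
      exact ⟨b, (Finset.mem_filter.1 hb).2, rfl⟩
    · rintro ⟨b, hb, rfl⟩
      show N.tgt b ∈ (Finset.univ.filter (fun b : A => N.src b = u.val)).image N.tgt
      exact Finset.mem_image.2 ⟨b, Finset.mem_filter.2 ⟨Finset.mem_univ b, hb⟩, rfl⟩
  -- Hall's condition
  have hall : ∀ s : Finset ι, s.card ≤ (s.biUnion tf).card := by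
    intro s
    set s' : Finset V := s.image Subtype.val with hs'def
    have hcard : s'.card = s.card := Finset.card_image_of_injective _ Subtype.val_injective
    set F : Finset A := Finset.univ.filter (fun b : A => N.src b ∈ s') with hFdef
    have hFmem : ∀ b : A, b ∈ F ↔ N.src b ∈ s' := by
      intro b
      rw [hFdef, Finset.mem_filter]
      simp
    have hOm : ∀ u ∈ s', OutDeg N.src u = 2 ∧
        ∀ b : A, N.src b = u → InDeg N.tgt (N.tgt b) = 2 := by
      intro u hu
      obtain ⟨uh, huhs, rfl⟩ := Finset.mem_image.1 hu
      exact uh.prop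
    have h1 : 2 * s'.card ≤ F.card := by
      refine Finset.mul_card_image_le_card_of_maps_to (f := N.src)
        (fun b hb => (hFmem b).1 hb) 2 ?_
      intro u hu
      obtain ⟨hout, -⟩ := hOm u hu
      obtain ⟨b1, b2, hne, hset⟩ := Set.ncard_eq_two.mp hout
      have hb1 : N.src b1 = u := by
        have : b1 ∈ {b : A | N.src b = u} := by rw [hset]; exact Set.mem_insert _ _
        exact this
      have hb2 : N.src b2 = u := by
        have : b2 ∈ {b : A | N.src b = u} := by rw [hset]; exact Set.mem_insert_of_mem _ rfl
        exact this
      have hsub : ({b1, b2} : Finset A) ⊆ F.filter (fun b => N.src b = u) := by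
        intro b hb
        rcases Finset.mem_insert.1 hb with rfl | hb
        · exact Finset.mem_filter.2 ⟨(hFmem b).2 (hb1 ▸ hu), hb1⟩
        · rw [Finset.mem_singleton.1 hb]
          exact Finset.mem_filter.2 ⟨(hFmem b2).2 (hb2 ▸ hu), hb2⟩
      calc 2 = ({b1, b2} : Finset A).card := (Finset.card_pair hne).symm
        _ ≤ _ := Finset.card_le_card hsub
    have h2 : F.card ≤ 2 * (F.image N.tgt).card := by
      refine Finset.card_le_mul_card_image F 2 ?_
      intro w hw
      obtain ⟨b, hbF, rfl⟩ := Finset.mem_image.1 hw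
      have hin2 : InDeg N.tgt (N.tgt b) = 2 := by
        obtain ⟨-, hom⟩ := hOm (N.src b) ((hFmem b).1 hbF)
        exact hom b rfl
      obtain ⟨c1, c2, hne, hset⟩ := Set.ncard_eq_two.mp hin2
      have hsub : F.filter (fun b' => N.tgt b' = N.tgt b) ⊆ ({c1, c2} : Finset A) := by
        intro b' hb'
        have : b' ∈ {c : A | N.tgt c = N.tgt b} := (Finset.mem_filter.1 hb').2
        rw [hset] at this
        rcases this with rfl | h2'
        · exact Finset.mem_insert_self _ _
        · rw [h2']; exact Finset.mem_insert_of_mem (Finset.mem_singleton_self _)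
      calc (F.filter (fun b' => N.tgt b' = N.tgt b)).card
          ≤ ({c1, c2} : Finset A).card := Finset.card_le_card hsub
        _ ≤ 2 := by rw [Finset.card_pair hne]
    have h3 : F.image N.tgt ⊆ s.biUnion tf := by
      intro w hw
      obtain ⟨b, hbF, rfl⟩ := Finset.mem_image.1 hw
      obtain ⟨uh, huhs, huhv⟩ := Finset.mem_image.1 ((hFmem b).1 hbF)
      exact Finset.mem_biUnion.2 ⟨uh, huhs, (htf uh (N.tgt b)).2 ⟨b, huhv.symm, rfl⟩⟩
    have hchain : 2 * s.card ≤ 2 * (s.biUnion tf).card := by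
      calc 2 * s.card = 2 * s'.card := by rw [hcard]
        _ ≤ F.card := h1
        _ ≤ 2 * (F.image N.tgt).card := h2
        _ ≤ 2 * (s.biUnion tf).card := Nat.mul_le_mul_left 2 (Finset.card_le_card h3)
    exact Nat.le_of_mul_le_mul_left hchain (by norm_num)
  obtain ⟨f, hfinj, hfmem⟩ := (Finset.all_card_le_biUnion_card_iff_exists_injective tf).1 hall
  have hfr : ∀ uh : ι, InDeg N.tgt (f uh) = 2 := by
    intro uh
    obtain ⟨b, hb1, hb2⟩ := (htf uh (f uh)).1 (hfmem uh)
    rw [← hb2]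
    exact uh.prop.2 b hb1
  -- the choice of incoming arcs for reticulations
  have exA : ∀ r : V, InDeg N.tgt r = 2 →
      ∃ b : A, N.tgt b = r ∧ ∀ uh : ι, f uh = r → N.src b = uh.val := by
    intro r hr
    by_cases hu : ∃ uh : ι, f uh = r
    · obtain ⟨uh, huh⟩ := hu
      obtain ⟨b, hb1, hb2⟩ := (htf uh (f uh)).1 (hfmem uh)
      refine ⟨b, by rw [hb2, huh], ?_⟩
      intro uh' huh'
      have : uh' = uh := hfinj (huh'.trans huh.symm)
      rw [this, hb1]
    · obtain ⟨b, hb⟩ := Set.nonempty_of_ncard_ne_zero (s := {b : A | N.tgt b = r})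
        (by rw [show {b : A | N.tgt b = r}.ncard = InDeg N.tgt r from rfl, hr]; norm_num)
      exact ⟨b, hb, fun uh' huh' => absurd ⟨uh', huh'⟩ hu⟩
  set S : Set A := N.S1 ∪ {b : A | ∃ (r : V) (hr : InDeg N.tgt r = 2), b = (exA r hr).choose}
    with hSdef
  have hchoose : ∀ (r : V) (hr : InDeg N.tgt r = 2),
      (exA r hr).choose ∈ S ∧ N.tgt (exA r hr).choose = r ∧
        ∀ uh : ι, f uh = r → N.src (exA r hr).choose = uh.val :=
    fun r hr => ⟨Or.inr ⟨r, hr, rfl⟩, (exA r hr).choose_spec.1, (exA r hr).choose_spec.2⟩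
  -- P1 : unique incoming S-arc at every non-root vertex
  have P1 : ∀ v : V, v ≠ N.root → ∃! b : A, b ∈ S ∧ N.tgt b = v := by
    intro v hv
    have hin : InDeg N.tgt v = 1 ∨ InDeg N.tgt v = 2 := by
      by_cases hleaf : ∃ x : X, N.leafEmb x = v
      · obtain ⟨x, rfl⟩ := hleaf
        exact Or.inl (N.leaf_indeg x)
      · rcases N.deg_other v hv hleaf with ⟨h1, -⟩ | ⟨h1, -⟩
        · exact Or.inr h1
        · exact Or.inl h1
    rcases hin with h1 | h2
    · obtain ⟨b0, hb0⟩ := Set.ncard_eq_one.mp h1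
      have hb0t : N.tgt b0 = v := by
        have : b0 ∈ {b : A | N.tgt b = v} := by rw [hb0]; rfl
        exact this
      have huniq : ∀ b : A, N.tgt b = v → b = b0 := fun b hb => by
        have : b ∈ {b : A | N.tgt b = v} := hb
        rw [hb0] at this; exact this
      refine ⟨b0, ⟨Or.inl (Or.inr (by rw [hb0t]; exact h1)), hb0t⟩, ?_⟩
      rintro b ⟨-, hb⟩
      exact huniq b hb
    · refine ⟨(exA v h2).choose, ⟨(hchoose v h2).1, (hchoose v h2).2.1⟩, ?_⟩
      rintro b ⟨hbS, hbt⟩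
      rcases hbS with hb1 | ⟨r, hr, rfl⟩
      · exfalso
        rcases hb1 with hout | hin1
        · have := hkey b (by rw [hbt]; exact h2)
          omega
        · rw [hbt] at hin1
          omega
      · have hrv : r = v := by rw [← (hchoose r hr).2.1, hbt]
        subst hrv
        rfl
  -- P3 : every non-leaf vertex has an outgoing S-arc
  have P3 : ∀ v : V, (¬∃ x : X, N.leafEmb x = v) → ∃ b ∈ S, N.src b = v := by
    intro v hleaf
    have hout : OutDeg N.src v = 1 ∨ OutDeg N.src v = 2 := by
      by_cases hv : v = N.root
      · subst hv; exact N.root_outdeg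
      · rcases N.deg_other v hv hleaf with ⟨-, h1⟩ | ⟨-, h1⟩
        · exact Or.inl h1
        · exact Or.inr h1
    rcases hout with h1 | h2
    · obtain ⟨b0, hb0⟩ := Set.ncard_eq_one.mp h1
      have hb0v : N.src b0 = v := by
        have : b0 ∈ {b : A | N.src b = v} := by rw [hb0]; rfl
        exact this
      exact ⟨b0, Or.inl (Or.inl (by rw [hb0v]; exact h1)), hb0v⟩
    · by_cases hom : ∀ b : A, N.src b = v → InDeg N.tgt (N.tgt b) = 2
      · refine ⟨(exA (f ⟨v, h2, hom⟩) (hfr ⟨v, h2, hom⟩)).choose,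
          (hchoose (f ⟨v, h2, hom⟩) (hfr ⟨v, h2, hom⟩)).1, ?_⟩
        exact (hchoose (f ⟨v, h2, hom⟩) (hfr ⟨v, h2, hom⟩)).2.2 ⟨v, h2, hom⟩ rfl
      · push_neg at hom
        obtain ⟨b, hbv, hbt⟩ := hom
        have hin1 : InDeg N.tgt (N.tgt b) = 1 := by
          by_cases hl : ∃ x : X, N.leafEmb x = N.tgt b
          · obtain ⟨x, hx⟩ := hl
            rw [← hx]; exact N.leaf_indeg x
          · rcases N.deg_other _ (root_noarc N b) hl with ⟨hi, -⟩ | ⟨hi, -⟩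
            · exact absurd hi hbt
            · exact hi
        exact ⟨b, Or.inl (Or.inr hin1), hbv⟩
  exact ⟨S, build N S P1 P3⟩
end Statement12Aux

/-- Every reticulation-visible binary phylogenetic network is
tree-based: if for every in-degree-2 vertex `v` there is a leaf `x` such that every
directed path from the root to `x` passes through `v`, then `N` is tree-based. -/
theorem statement_12 {X : Type u1} {V : Type u2} {A : Type u3} (N : PhyloNetwork X V A)
    (h : ∀ v : V, InDeg N.tgt v = 2 →
      ∃ x : X, ∀ p : List A, ArcWalk N.src N.tgt N.root p (N.leafEmb x) →
        v = N.root ∨ ∃ a ∈ p, N.tgt a = v) :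
    N.TreeBased := by
  exact Statement12Aux.main N h
end

section
/- The converse of the antichain-to-leaf criterion fails: there exists a binary phylogenetic network N over a finite leaf set X that satisfies the antichain-to-leaf property but is not tree-based. -/
/-! Directed multigraphs, walks, and binary phylogenetic networks
(following Francis & Steel, "Which phylogenetic networks are merely
trees with additional arcs?"). -/

universe u1 u2 u3 u4 u5 u6 u7

/-! ### Auxiliary construction for Statement 13 -/

namespace Statement13Aux

/-- Sources of the 18 arcs. -/
def asrc : Fin 18 → Fin 15 := ![0,0,1,1,2,2,3,3,4,5,6,6,7,7,8,8,9,10]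
/-- Targets of the 18 arcs. -/
def atgt : Fin 18 → Fin 15 := ![1,2,3,4,4,11,5,10,5,6,12,7,9,8,9,13,10,14]
/-- The four leaves. -/
def lE : Fin 4 → Fin 15 := ![11,12,13,14]

lemma inDeg_eq (v : Fin 15) :
    InDeg atgt v = (Finset.univ.filter fun a => atgt a = v).card := by
  rw [InDeg, Set.ncard_eq_toFinset_card', Set.toFinset_setOf]

lemma outDeg_eq (v : Fin 15) :
    OutDeg asrc v = (Finset.univ.filter fun a => asrc a = v).card := by
  rw [OutDeg, Set.ncard_eq_toFinset_card', Set.toFinset_setOf]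

lemma arc_mono : ∀ a : Fin 18, (asrc a).val < (atgt a).val := by decide

lemma walk_le : ∀ {p : List (Fin 18)} {u v : Fin 15},
    ArcWalk asrc atgt u p v → u.val ≤ v.val ∧ (p ≠ [] → u.val < v.val) := by
  intro p
  induction p with
  | nil =>
    intro u v h
    cases h with
    | nil => exact ⟨le_rfl, fun h => absurd rfl h⟩
  | cons a p ih =>
    intro u v h
    cases h with
    | cons hs hw =>
      have h1 := (ih hw).1
      have h2 := arc_mono a
      subst hs
      exact ⟨le_of_lt (lt_of_lt_of_le h2 h1), fun _ => lt_of_lt_of_le h2 h1⟩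

/-- Boolean walk checker. -/
def chainCheck : Fin 15 → List (Fin 18) → Fin 15 → Bool
  | u, [], v => u == v
  | u, a :: p, v => (asrc a == u) && chainCheck (atgt a) p v

lemma chainCheck_sound : ∀ (p : List (Fin 18)) (u v : Fin 15),
    chainCheck u p v = true → ArcWalk asrc atgt u p v := by
  intro p
  induction p with
  | nil =>
    intro u v h
    have : u = v := by simpa [chainCheck] using h
    subst this; exact ArcWalk.nil u
  | cons a p ih =>
    intro u v h
    rw [chainCheck, Bool.and_eq_true, beq_iff_eq] at h
    exact ArcWalk.cons h.1 (ih _ _ h.2)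

/-- Fuelled walk search. -/
def findWalk : ℕ → Fin 15 → Fin 15 → Option (List (Fin 18))
  | 0, u, v => if u = v then some [] else none
  | (n+1), u, v =>
    if u = v then some [] else
      (List.finRange 18).findSome? fun a =>
        if asrc a = u then (findWalk n (atgt a) v).map (a :: ·) else none

lemma findWalk_sound : ∀ (n : ℕ) (u v : Fin 15) (p : List (Fin 18)),
    findWalk n u v = some p → ArcWalk asrc atgt u p v := by
  intro n
  induction n with
  | zero =>
    intro u v p h
    rw [findWalk] at h
    split at h
    · next heq => cases h; subst heq; exact ArcWalk.nil u
    · cases h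
  | succ n ih =>
    intro u v p h
    rw [findWalk] at h
    split at h
    · next heq => cases h; subst heq; exact ArcWalk.nil u
    · obtain ⟨a, -, ha⟩ := List.exists_of_findSome?_eq_some h
      split at ha
      · next hsrc =>
        obtain ⟨q, hq, hpq⟩ := Option.map_eq_some_iff.mp ha
        subst hpq
        exact ArcWalk.cons hsrc (ih _ _ _ hq)
      · cases ha

/-- Chosen path from each vertex to a leaf. -/
def pth : Fin 15 → List (Fin 18) :=
  ![[1,5],[2,6,9,10],[5],[7,17],[8,9,10],[9,10],[10],[13,15],[15],[16,17],[17],[],[],[],[]]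

/-- The counterexample network. -/
def N : PhyloNetwork (Fin 4) (Fin 15) (Fin 18) where
  src := asrc
  tgt := atgt
  leafEmb := lE
  root := 0
  finV := inferInstance
  finA := inferInstance
  leafEmb_inj := by decide
  acyclic := by
    intro v p hp hw
    exact absurd ((walk_le hw).2 hp) (lt_irrefl _)
  leaf_iff := by
    simp only [outDeg_eq]; decide
  leaf_indeg := by
    simp only [inDeg_eq]; decide
  root_indeg := by
    rw [inDeg_eq]; decide
  root_unique := by
    simp only [inDeg_eq]; decide
  root_outdeg := by
    rw [outDeg_eq]; decide
  deg_other := by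
    simp only [inDeg_eq, outDeg_eq]; decide

/-- Concatenating one arc to a walk. -/
lemma ArcWalk_concat {V A : Type} {s t : A → V} :
    ∀ {p : List A} {u v : V}, ArcWalk s t u p v → ∀ a : A, s a = v →
      ArcWalk s t u (p ++ [a]) (t a) := by
  intro p
  induction p with
  | nil =>
    intro u v h a ha
    cases h
    exact ArcWalk.cons ha (ArcWalk.nil _)
  | cons b q ih =>
    intro u v h a ha
    cases h with
    | cons hs hw => exact ArcWalk.cons hs (ih hw a ha)

lemma atl : N.AntichainToLeaf := by
  intro 𝒜 hleaf hanti
  refine ⟨pth, ?_, ?_⟩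
  · intro v hv
    have hnl : ∀ x : Fin 4, lE x ≠ v := fun x hx => hleaf v hv ⟨x, hx⟩
    have key : ∀ w : Fin 15, (∀ x : Fin 4, lE x ≠ w) →
        ∃ x : Fin 4, chainCheck w (pth w) (lE x) = true := by decide
    obtain ⟨x, hx⟩ := key v hnl
    exact ⟨lE x, ⟨x, rfl⟩, chainCheck_sound _ _ _ hx⟩
  · intro u hu v hv huv
    have hnlu : ∀ x : Fin 4, lE x ≠ u := fun x hx => hleaf u hu ⟨x, hx⟩
    have hnlv : ∀ x : Fin 4, lE x ≠ v := fun x hx => hleaf v hv ⟨x, hx⟩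
    rcases h1 : findWalk 15 u v with _ | p
    · rcases h2 : findWalk 15 v u with _ | p
      · have key : ∀ u v : Fin 15, (∀ x : Fin 4, lE x ≠ u) → (∀ x : Fin 4, lE x ≠ v) →
            u ≠ v → findWalk 15 u v = none → findWalk 15 v u = none →
            ∀ a ∈ pth u, a ∉ pth v := by decide
        exact key u v hnlu hnlv huv h1 h2
      · exact absurd (findWalk_sound _ _ _ _ h2)
          (hanti v hv u hu (Ne.symm huv) p)
    · exact absurd (findWalk_sound _ _ _ _ h1) (hanti u hu v hv huv p)

/-- Extract the unique arc in `S` leaving a reticulation-type source. -/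
lemma ntb : ¬ N.TreeBased := by
  rintro ⟨S, hroot, hleafiff⟩
  -- vertex 3 (= t) is not a leaf, so it has an outgoing arc in S
  have ht : (3 : Fin 15) ∉ N.leaves := by
    rintro ⟨x, hx⟩
    exact absurd hx (by revert x; decide)
  have ht0 : OutDegIn N.src S 3 ≠ 0 := fun h => ht ((hleafiff 3).mp h)
  obtain ⟨a0, ha0S, ha0src⟩ := Set.nonempty_of_ncard_ne_zero ht0
  -- vertex 4 (= q1), only outgoing arc is arc 8
  have hq1 : (4 : Fin 15) ∉ N.leaves := by
    rintro ⟨x, hx⟩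
    exact absurd hx (by revert x; decide)
  have hq10 : OutDegIn N.src S 4 ≠ 0 := fun h => hq1 ((hleafiff 4).mp h)
  obtain ⟨a1, ha1S, ha1src⟩ := Set.nonempty_of_ncard_ne_zero hq10
  have ha1 : a1 = 8 := by
    revert ha1src; fin_cases a1 <;> decide
  subst ha1
  -- vertex 9 (= q2), only outgoing arc is arc 16
  have hq2 : (9 : Fin 15) ∉ N.leaves := by
    rintro ⟨x, hx⟩
    exact absurd hx (by revert x; decide)
  have hq20 : OutDegIn N.src S 9 ≠ 0 := fun h => hq2 ((hleafiff 9).mp h)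
  obtain ⟨a2, ha2S, ha2src⟩ := Set.nonempty_of_ncard_ne_zero hq20
  have ha2 : a2 = 16 := by
    revert ha2src; fin_cases a2 <;> decide
  subst ha2
  -- a0 is arc 6 or arc 7
  have ha0 : a0 = 6 ∨ a0 = 7 := by
    revert ha0src; fin_cases a0 <;> decide
  -- common clash argument: two distinct S-arcs into the same vertex
  have clash : ∀ b c : Fin 18, b ∈ S → c ∈ S → b ≠ c → N.tgt b = N.tgt c → False := by
    intro b c hbS hcS hbc htgt
    obtain ⟨pb, ⟨hpbS, hpbW⟩, -⟩ := hroot (N.src b)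
    obtain ⟨pc, ⟨hpcS, hpcW⟩, -⟩ := hroot (N.src c)
    obtain ⟨pr, -, hprU⟩ := hroot (N.tgt b)
    have hb : (∀ a ∈ pb ++ [b], a ∈ S) ∧ ArcWalk N.src N.tgt N.root (pb ++ [b]) (N.tgt b) := by
      constructor
      · intro a ha
        rcases List.mem_append.mp ha with h | h
        · exact hpbS a h
        · rw [List.mem_singleton.mp h]; exact hbS
      · exact ArcWalk_concat hpbW b rfl
    have hc : (∀ a ∈ pc ++ [c], a ∈ S) ∧ ArcWalk N.src N.tgt N.root (pc ++ [c]) (N.tgt b) := by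
      constructor
      · intro a ha
        rcases List.mem_append.mp ha with h | h
        · exact hpcS a h
        · rw [List.mem_singleton.mp h]; exact hcS
      · rw [htgt]; exact ArcWalk_concat hpcW c rfl
    have heq : pb ++ [b] = pc ++ [c] := (hprU _ hb).trans (hprU _ hc).symm
    have := congrArg List.getLast? heq
    rw [List.getLast?_concat, List.getLast?_concat, Option.some.injEq] at this
    exact hbc this
  rcases ha0 with h | h
  · subst h
    exact clash 6 8 ha0S ha1S (by decide) (by decide)
  · subst h
    exact clash 7 16 ha0S ha2S (by decide) (by decide)

end Statement13Aux

/-- The converse of the antichain-to-leaf criterion fails: there is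
a binary phylogenetic network that satisfies the antichain-to-leaf property but is
not tree-based. -/
theorem statement_13 :
    ∃ (X V A : Type) (N : PhyloNetwork X V A),
      N.AntichainToLeaf ∧ ¬ N.TreeBased := by
  exact ⟨Fin 4, Fin 15, Fin 18, Statement13Aux.N, Statement13Aux.atl, Statement13Aux.ntb⟩
end
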